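/- Let F be a distribution on [0,∞) with F ∈ OS but F ∉ L(γ) for some γ ≥ 0, and suppose liminf_{x→∞} F̄(x-t)/F̄(x) ≥ e^{γt} for all t > 0. Then F^{*k} ∉ L(γ) for every integer k ≥ 2. -/

import Mathlib

open MeasureTheory Filter Set Asymptotics

/-- The tail `F̄(x) = μ((x,∞))` of a distribution `μ` on `ℝ`. -/
noncomputable def tail (μ : MeasureTheory.Measure ℝ) (x : ℝ) : ℝ := (μ (Set.Ioi x)).toReal

/-- Convolution of two distributions on `ℝ`. -/
noncomputable def mconv (μ ν : MeasureTheory.Measure ℝ) : MeasureTheory.Measure ℝ :=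
  MeasureTheory.Measure.map (fun p : ℝ × ℝ => p.1 + p.2) (μ.prod ν)

/-- `iconv μ k` is the `k`-fold convolution `μ^{*k}` (with `μ^{*0} = δ₀`). -/
noncomputable def iconv (μ : MeasureTheory.Measure ℝ) : ℕ → MeasureTheory.Measure ℝ
  | 0 => MeasureTheory.Measure.dirac 0
  | n + 1 => mconv (iconv μ n) μ

/-- The class `L(γ)`: `F̄(x-t) ~ e^{γt} F̄(x)` as `x → ∞`, for every `t`. -/
def MemL (γ : ℝ) (μ : MeasureTheory.Measure ℝ) : Prop :=
  ∀ t : ℝ, Filter.Tendsto (fun x => tail μ (x - t) / tail μ x) Filter.atTop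
    (nhds (Real.exp (γ * t)))

/-- The class `OS`: `limsup_{x→∞} (F*F)̄(x) / F̄(x) < ∞`. -/
def MemOS (μ : MeasureTheory.Measure ℝ) : Prop :=
  Filter.IsBoundedUnder (· ≤ ·) Filter.atTop (fun x => tail (mconv μ μ) x / tail μ x)

/-!
Write `G = H * F` with `H = F^{*(k-1)}`. For a cut point `M`, the event `{X + Y > x}`
(`X ~ H`, `Y ~ F`) is covered by `{X ≤ x - M}`, `{Y ≤ M - T}` and the corner
`{X > x - M, Y > M - T}`. On the first two pieces the lower bounds `F̄(z - T) ≳ e^{γT} F̄(z)`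
and `H̄(z - T) ≳ e^{γT} H̄(z)` for large `z` carry over from `x` to `x - T`, while the corner
costs `H̄(x - M) F̄(M - T) = O(F̄(M) F̄(x - M))`, which `F ∈ OS` makes at most `ε F̄(x)` for a
cut point in a fixed window. Hence `Ḡ(x - T) ≥ (e^{γT} - ε) Ḡ(x) - ε F̄(x)`, and inductively
every `F^{*k}` satisfies the liminf bound and `F^{*k}̄ = O(F̄)`.

Since `F ∉ L(γ)`, there are arbitrarily large `w` with `F̄(w - T₀) ≥ (e^{γT₀} + ε₀) F̄(w)`. Over
a window of positive `H`-mass this surplus adds a fixed multiple of `F̄(x)` to the lower bound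
for `Ḡ(x - T)`; as `Ḡ = O(F̄)`, that multiple is not `o(Ḡ(x))`, so
`Ḡ(x - T) / Ḡ(x) ↛ e^{γT}`.
-/

open scoped ENNReal Topology

section Convolution

variable {μ ν : Measure ℝ}

instance [IsFiniteMeasure μ] [IsFiniteMeasure ν] : IsFiniteMeasure (mconv μ ν) := by
  unfold mconv; infer_instance

instance [IsProbabilityMeasure μ] [IsProbabilityMeasure ν] : IsProbabilityMeasure (mconv μ ν) :=
  Measure.isProbabilityMeasure_map measurable_add.aemeasurable

instance (k : ℕ) [IsProbabilityMeasure μ] : IsProbabilityMeasure (iconv μ k) := by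
  induction k with
  | zero => exact Measure.dirac.isProbabilityMeasure
  | succ n _ => unfold iconv; infer_instance

lemma mconv_apply {s : Set ℝ} (hs : MeasurableSet s) :
    mconv μ ν s = μ.prod ν ((fun p : ℝ × ℝ => p.1 + p.2) ⁻¹' s) :=
  Measure.map_apply measurable_add hs

lemma measurableSet_lt_add (a : ℝ) : MeasurableSet {p : ℝ × ℝ | a < p.1 + p.2} :=
  measurable_add measurableSet_Ioi

lemma prod_fst_mem_lt_add [SFinite ν] {s : Set ℝ} (hs : MeasurableSet s) (a : ℝ) :
    μ.prod ν {p | p.1 ∈ s ∧ a < p.1 + p.2} = ∫⁻ y in s, ν (Ioi (a - y)) ∂μ := by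
  have hm : MeasurableSet {p : ℝ × ℝ | p.1 ∈ s ∧ a < p.1 + p.2} :=
    (measurable_fst hs).inter (measurableSet_lt_add a)
  rw [Measure.prod_apply hm, ← lintegral_indicator hs]
  congr 1 with y
  by_cases hy : y ∈ s
  · rw [indicator_of_mem hy]
    congr 1 with w
    simp [hy, sub_lt_iff_lt_add']
  · simp [hy]

lemma prod_snd_mem_lt_add [SFinite μ] [SFinite ν] {s : Set ℝ} (hs : MeasurableSet s) (a : ℝ) :
    μ.prod ν {p | p.2 ∈ s ∧ a < p.1 + p.2} = ∫⁻ w in s, μ (Ioi (a - w)) ∂ν := by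
  have hm : MeasurableSet {p : ℝ × ℝ | p.2 ∈ s ∧ a < p.1 + p.2} :=
    (measurable_snd hs).inter (measurableSet_lt_add a)
  rw [Measure.prod_apply_symm hm, ← lintegral_indicator hs]
  congr 1 with w
  by_cases hw : w ∈ s
  · rw [indicator_of_mem hw]
    congr 1 with y
    simp [hw, sub_lt_iff_lt_add]
  · simp [hw]

lemma mconv_Ioi [SFinite ν] (x : ℝ) : mconv μ ν (Ioi x) = ∫⁻ y, ν (Ioi (x - y)) ∂μ := by
  simpa [mconv_apply measurableSet_Ioi, preimage] using
    prod_fst_mem_lt_add (μ := μ) (ν := ν) MeasurableSet.univ x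

lemma mconv_Ioi' [SFinite μ] [SFinite ν] (x : ℝ) :
    mconv μ ν (Ioi x) = ∫⁻ w, μ (Ioi (x - w)) ∂ν := by
  simpa [mconv_apply measurableSet_Ioi, preimage] using
    prod_snd_mem_lt_add (μ := μ) (ν := ν) MeasurableSet.univ x

lemma mul_le_mconv_Ioi [SFinite ν] (x s : ℝ) :
    μ (Ioi (x - s)) * ν (Ioi s) ≤ mconv μ ν (Ioi x) := by
  rw [← Measure.prod_prod, mconv_apply measurableSet_Ioi]
  refine measure_mono fun p hp => ?_
  simp only [mem_prod, mem_Ioi] at hp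
  simp only [mem_preimage, mem_Ioi]
  linarith [hp.1, hp.2]

lemma sum_mul_le_mconv_Ioi [SFinite ν] {a : ℕ → ℝ} (ha : Monotone a) (x : ℝ) (N : ℕ) :
    ∑ n ∈ Finset.range N, μ (Ioc (a n) (a (n + 1))) * ν (Ioi (x - a n)) ≤ mconv μ ν (Ioi x) := by
  have hdisj : (Finset.range N : Set ℕ).PairwiseDisjoint
      fun n => Ioc (a n) (a (n + 1)) ×ˢ Ioi (x - a n) :=
    fun m _ n _ hmn => (ha.pairwise_disjoint_on_Ioc_succ hmn).set_prod_left _ _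
  rw [Finset.sum_congr rfl fun n _ => (Measure.prod_prod _ _).symm,
    ← measure_biUnion_finset hdisj fun n _ => measurableSet_Ioc.prod measurableSet_Ioi,
    mconv_apply measurableSet_Ioi]
  refine measure_mono fun p hp => ?_
  simp only [mem_iUnion, mem_prod, mem_Ioc, mem_Ioi] at hp
  obtain ⟨n, -, ⟨h1, -⟩, h2⟩ := hp
  simp only [mem_preimage, mem_Ioi]
  linarith

lemma le_mconv_Ioi_of_Iio [IsProbabilityMeasure μ] [SFinite ν] (hμ : μ (Iio 0) = 0) (x : ℝ) :
    ν (Ioi x) ≤ mconv μ ν (Ioi x) := by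
  have hae : ∀ᵐ y ∂μ, 0 ≤ y :=
    (measure_eq_zero_iff_ae_notMem.mp hμ).mono fun y hy => not_lt.mp hy
  rw [mconv_Ioi]
  calc ν (Ioi x) = ∫⁻ _, ν (Ioi x) ∂μ := by simp
    _ ≤ ∫⁻ y, ν (Ioi (x - y)) ∂μ :=
      lintegral_mono_ae (hae.mono fun y hy => measure_mono (Ioi_subset_Ioi (by linarith)))

lemma mconv_Iio_eq_zero [SFinite ν] (hμ : μ (Iio 0) = 0) (hν : ν (Iio 0) = 0) :
    mconv μ ν (Iio 0) = 0 := by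
  rw [mconv_apply measurableSet_Iio]
  refine measure_mono_null (t := Iio 0 ×ˢ univ ∪ univ ×ˢ Iio 0) ?_ ?_
  · rintro ⟨a, b⟩ hab
    simp only [mem_preimage, mem_Iio] at hab
    by_cases ha : a < 0
    · exact Or.inl ⟨ha, trivial⟩
    · exact Or.inr ⟨trivial, show b < 0 by linarith⟩
  · exact measure_union_null (by rw [Measure.prod_prod, hμ, zero_mul])
      (by rw [Measure.prod_prod, hν, mul_zero])

lemma iconv_Iio_eq_zero [SFinite μ] (hμ : μ (Iio 0) = 0) (k : ℕ) : iconv μ k (Iio 0) = 0 := by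
  induction k with
  | zero => simp [iconv, Measure.dirac_apply' _ measurableSet_Iio]
  | succ n ih => exact mconv_Iio_eq_zero ih hμ

lemma iconv_one [SFinite μ] : iconv μ 1 = μ := by
  change Measure.map _ ((Measure.dirac 0).prod μ) = μ
  rw [Measure.dirac_prod, Measure.map_map measurable_add measurable_prodMk_left]
  simp [Function.comp_def]

end Convolution

section Splitting

variable {μ ν : Measure ℝ} [SFinite μ] [SFinite ν]

lemma measurable_measure_Ioi_sub (ρ : Measure ℝ) (x : ℝ) :
    Measurable fun y => ρ (Ioi (x - y)) :=
  Monotone.measurable fun _ _ h => measure_mono (Ioi_subset_Ioi (by linarith))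

lemma mconv_Ioi_le (x a b : ℝ) :
    mconv μ ν (Ioi x) ≤ ∫⁻ y in Iic a, ν (Ioi (x - y)) ∂μ + ∫⁻ w in Iic b, μ (Ioi (x - w)) ∂ν
      + μ (Ioi a) * ν (Ioi b) := by
  rw [mconv_apply measurableSet_Ioi, ← prod_fst_mem_lt_add measurableSet_Iic,
    ← prod_snd_mem_lt_add measurableSet_Iic, ← Measure.prod_prod]
  refine (measure_mono fun p hp => ?_).trans
    ((measure_union_le _ _).trans (add_le_add_left (measure_union_le _ _) _))
  simp only [mem_preimage, mem_Ioi] at hp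
  by_cases ha : p.1 ≤ a
  · exact Or.inl (Or.inl ⟨ha, hp⟩)
  by_cases hb : p.2 ≤ b
  · exact Or.inl (Or.inr ⟨hb, hp⟩)
  exact Or.inr ⟨not_le.mp ha, not_le.mp hb⟩

lemma add_le_mconv_Ioi {x a b : ℝ} (h : a + b ≤ x) :
    ∫⁻ y in Iic a, ν (Ioi (x - y)) ∂μ + ∫⁻ w in Iic b, μ (Ioi (x - w)) ∂ν
      ≤ mconv μ ν (Ioi x) := by
  have hm : MeasurableSet {p : ℝ × ℝ | p.2 ∈ Iic b ∧ x < p.1 + p.2} :=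
    (measurable_snd measurableSet_Iic).inter (measurableSet_lt_add x)
  rw [mconv_apply measurableSet_Ioi, ← prod_fst_mem_lt_add measurableSet_Iic,
    ← prod_snd_mem_lt_add measurableSet_Iic, ← measure_union _ hm]
  · exact measure_mono fun p hp => hp.elim (·.2) (·.2)
  · exact disjoint_left.mpr fun p ⟨ha, _⟩ ⟨hb, hx⟩ =>
      hx.not_ge ((add_le_add ha hb).trans h)

lemma mconv_Ioi_sub_ge {x T M : ℝ} {r c : ℝ≥0∞} {B : Set ℝ} (hB : MeasurableSet B)
    (hBM : B ⊆ Iic (x - M))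
    (hν : ∀ y ≤ x - M, r * ν (Ioi (x - y)) ≤ ν (Ioi (x - T - y)))
    (hμ : ∀ w ≤ M - T, r * μ (Ioi (x - w)) ≤ μ (Ioi (x - T - w)))
    (hbump : ∀ y ∈ B, r * ν (Ioi (x - y)) + c * ν (Ioi x) ≤ ν (Ioi (x - T - y))) :
    r * mconv μ ν (Ioi x) + c * ν (Ioi x) * μ B
      ≤ mconv μ ν (Ioi (x - T)) + r * (μ (Ioi (x - M)) * ν (Ioi (M - T))) := by
  have hleft : r * ∫⁻ y in Iic (x - M), ν (Ioi (x - y)) ∂μ + c * ν (Ioi x) * μ B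
      ≤ ∫⁻ y in Iic (x - M), ν (Ioi (x - T - y)) ∂μ := by
    calc _ = ∫⁻ y in Iic (x - M),
          (r * ν (Ioi (x - y)) + B.indicator (fun _ => c * ν (Ioi x)) y) ∂μ := by
          rw [lintegral_add_left ((measurable_measure_Ioi_sub ν x).const_mul r),
            lintegral_const_mul _ (measurable_measure_Ioi_sub ν x), lintegral_indicator_const hB,
            Measure.restrict_apply hB, inter_eq_left.mpr hBM]
      _ ≤ _ := by
          refine setLIntegral_mono' measurableSet_Iic fun y hy => ?_
          by_cases hyB : y ∈ B
          · simpa [hyB] using hbump y hyB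
          · simpa [hyB] using hν y hy
  have hright : r * ∫⁻ w in Iic (M - T), μ (Ioi (x - w)) ∂ν
      ≤ ∫⁻ w in Iic (M - T), μ (Ioi (x - T - w)) ∂ν := by
    rw [← lintegral_const_mul _ (measurable_measure_Ioi_sub μ x)]
    exact setLIntegral_mono' measurableSet_Iic hμ
  calc _ ≤ r * (∫⁻ y in Iic (x - M), ν (Ioi (x - y)) ∂μ
          + ∫⁻ w in Iic (M - T), μ (Ioi (x - w)) ∂ν + μ (Ioi (x - M)) * ν (Ioi (M - T)))
          + c * ν (Ioi x) * μ B := by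
        gcongr
        exact mconv_Ioi_le x _ _
    _ = (r * ∫⁻ y in Iic (x - M), ν (Ioi (x - y)) ∂μ + c * ν (Ioi x) * μ B)
          + r * ∫⁻ w in Iic (M - T), μ (Ioi (x - w)) ∂ν
          + r * (μ (Ioi (x - M)) * ν (Ioi (M - T))) := by ring
    _ ≤ _ := by
        gcongr
        exact (add_le_add hleft hright).trans (add_le_mconv_Ioi (by linarith))

end Splitting

section Tail

variable {μ ν : Measure ℝ}

lemma tail_nonneg (x : ℝ) : 0 ≤ tail μ x := ENNReal.toReal_nonneg

lemma ofReal_tail [IsFiniteMeasure μ] (x : ℝ) : ENNReal.ofReal (tail μ x) = μ (Ioi x) :=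
  ENNReal.ofReal_toReal (measure_ne_top _ _)

lemma ofReal_mul_le_of_tail [IsFiniteMeasure μ] [IsFiniteMeasure ν] {r a b : ℝ} (hr : 0 ≤ r)
    (h : r * tail μ a ≤ tail ν b) : ENNReal.ofReal r * μ (Ioi a) ≤ ν (Ioi b) := by
  rw [← ofReal_tail, ← ofReal_tail, ← ENNReal.ofReal_mul hr]
  exact ENNReal.ofReal_le_ofReal h

lemma tail_antitone [IsFiniteMeasure μ] : Antitone (tail μ) := fun _ _ h =>
  ENNReal.toReal_mono (measure_ne_top _ _) (measure_mono (Ioi_subset_Ioi h))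

lemma tendsto_tail_atTop [IsFiniteMeasure μ] : Tendsto (tail μ) atTop (𝓝 0) := by
  have h := tendsto_measure_iInter_atTop (μ := μ) (fun x => measurableSet_Ioi.nullMeasurableSet)
    (fun _ _ h => Ioi_subset_Ioi h) ⟨0, measure_ne_top _ _⟩
  rw [show (⋂ x : ℝ, Ioi x) = ∅ from eq_empty_of_forall_notMem fun z hz =>
    lt_irrefl z (mem_iInter.mp hz z), measure_empty] at h
  exact (ENNReal.tendsto_toReal ENNReal.zero_ne_top).comp h

lemma tail_mul_tail_le [IsFiniteMeasure μ] [IsFiniteMeasure ν] (x s : ℝ) :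
    tail μ (x - s) * tail ν s ≤ tail (mconv μ ν) x := by
  have := ENNReal.toReal_mono (measure_ne_top _ _) (mul_le_mconv_Ioi (μ := μ) (ν := ν) x s)
  rwa [ENNReal.toReal_mul] at this

lemma tail_le_tail_mconv [IsProbabilityMeasure μ] [IsFiniteMeasure ν] (hμ : μ (Iio 0) = 0)
    (x : ℝ) : tail ν x ≤ tail (mconv μ ν) x :=
  ENNReal.toReal_mono (measure_ne_top _ _) (le_mconv_Ioi_of_Iio hμ x)

lemma tail_mconv_sub_ge [IsFiniteMeasure μ] [IsFiniteMeasure ν] {x T M r c : ℝ} (hr : 0 ≤ r)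
    (hc : 0 ≤ c) {B : Set ℝ} (hB : MeasurableSet B) (hBM : B ⊆ Iic (x - M))
    (hν : ∀ z ≥ M, r * tail ν z ≤ tail ν (z - T))
    (hμ : ∀ z ≥ x - M + T, r * tail μ z ≤ tail μ (z - T))
    (hbump : ∀ y ∈ B, r * tail ν (x - y) + c * tail ν x ≤ tail ν (x - T - y)) :
    r * tail (mconv μ ν) x + c * tail ν x * (μ B).toReal
      ≤ tail (mconv μ ν) (x - T) + r * (tail μ (x - M) * tail ν (M - T)) := by
  have key := mconv_Ioi_sub_ge (μ := μ) (ν := ν) (x := x) (T := T) (M := M)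
    (r := ENNReal.ofReal r) (c := ENNReal.ofReal c) hB hBM
    (fun y hy => ofReal_mul_le_of_tail hr (by
      simpa only [sub_right_comm] using hν (x - y) (by linarith)))
    (fun w hw => ofReal_mul_le_of_tail hr (by
      simpa only [sub_right_comm] using hμ (x - w) (by linarith)))
    (fun y hy => by
      rw [← ofReal_tail, ← ofReal_tail, ← ofReal_tail, ← ENNReal.ofReal_mul hr,
        ← ENNReal.ofReal_mul hc, ← ENNReal.ofReal_add (mul_nonneg hr (tail_nonneg _))
          (mul_nonneg hc (tail_nonneg _))]
      exact ENNReal.ofReal_le_ofReal (hbump y hy))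
  have := ENNReal.toReal_mono (by finiteness) key
  rw [ENNReal.toReal_add (by finiteness) (by finiteness),
    ENNReal.toReal_add (by finiteness) (by finiteness)] at this
  simpa only [ENNReal.toReal_mul, ENNReal.toReal_ofReal hr, ENNReal.toReal_ofReal hc, tail]
    using this

lemma toReal_measure_Ioc [IsFiniteMeasure μ] {a b : ℝ} (hab : a ≤ b) :
    (μ (Ioc a b)).toReal = tail μ a - tail μ b := by
  rw [← Ioi_sdiff_Ioi, measure_sdiff (Ioi_subset_Ioi hab) measurableSet_Ioi.nullMeasurableSet
    (measure_ne_top _ _), ENNReal.toReal_sub_of_le (measure_mono (Ioi_subset_Ioi hab))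
    (measure_ne_top _ _)]
  rfl

end Tail

/-- The lower half of `MemL γ μ`, i.e. `liminf μ̄(x - t) / μ̄(x) ≥ e^{γt}` for every `t > 0`. -/
def MemLowerL (γ : ℝ) (μ : Measure ℝ) : Prop :=
  ∀ t > 0, ∀ r < Real.exp (γ * t), ∀ᶠ x in atTop, r * tail μ x ≤ tail μ (x - t)

section TailRatio

variable {γ : ℝ}

lemma isBoundedUnder_ge_tail_ratio (μ : Measure ℝ) (t : ℝ) :
    IsBoundedUnder (· ≥ ·) atTop fun x => tail μ (x - t) / tail μ x :=
  isBoundedUnder_of ⟨0, fun _ => div_nonneg (tail_nonneg _) (tail_nonneg _)⟩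

lemma exists_pos_eventually_tail_le {μ ν : Measure ℝ} (h : tail μ =O[atTop] tail ν) :
    ∃ C > 0, ∀ᶠ x in atTop, tail μ x ≤ C * tail ν x := by
  obtain ⟨C, hC, h⟩ := h.exists_pos
  refine ⟨C, hC, h.bound.mono fun x hx => ?_⟩
  simpa [Real.norm_of_nonneg (tail_nonneg _)] using hx

lemma MemOS.isBigO {μ : Measure ℝ} (hOS : MemOS μ) (hpos : ∀ x, 0 < tail μ x) :
    tail (mconv μ μ) =O[atTop] tail μ := by
  obtain ⟨C, hC⟩ := hOS
  refine IsBigO.of_bound C ((eventually_map.mp hC).mono fun x hx => ?_)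
  rw [Real.norm_of_nonneg (tail_nonneg _), Real.norm_of_nonneg (tail_nonneg _)]
  exact (div_le_iff₀ (hpos x)).mp hx

lemma tendsto_tail_ratio_neg {μ : Measure ℝ} {s : ℝ}
    (h : Tendsto (fun x => tail μ (x - s) / tail μ x) atTop (𝓝 (Real.exp (γ * s)))) :
    Tendsto (fun x => tail μ (x - -s) / tail μ x) atTop (𝓝 (Real.exp (γ * -s))) := by
  have h' := (h.comp (tendsto_atTop_add_const_right atTop s tendsto_id)).inv₀
    (Real.exp_pos _).ne'
  rw [mul_neg, Real.exp_neg]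
  refine h'.congr fun x => ?_
  simp [inv_div]

lemma memL_of_forall_pos {μ : Measure ℝ} (hpos : ∀ x, 0 < tail μ x)
    (h : ∀ t > 0, Tendsto (fun x => tail μ (x - t) / tail μ x) atTop (𝓝 (Real.exp (γ * t)))) :
    MemL γ μ := by
  intro t
  rcases lt_trichotomy t 0 with ht | rfl | ht
  · simpa using tendsto_tail_ratio_neg (h (-t) (neg_pos.mpr ht))
  · simp [div_self (hpos _).ne']
  · exact h t ht

lemma frequently_add_le_of_not_tendsto {α : Type*} {l : Filter α} {f : α → ℝ} {a : ℝ}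
    (hlow : ∀ ε > 0, ∀ᶠ x in l, a - ε < f x) (h : ¬ Tendsto f l (𝓝 a)) :
    ∃ ε > 0, ∃ᶠ x in l, a + ε ≤ f x := by
  rw [Metric.tendsto_nhds] at h
  push Not at h
  obtain ⟨ε, hε, hfreq⟩ := h
  refine ⟨ε, hε, (hfreq.and_eventually (hlow ε hε)).mono fun x ⟨hfar, hlow⟩ => ?_⟩
  rw [Real.dist_eq] at hfar
  cases abs_cases (f x - a) <;> linarith

lemma exists_measure_Icc_ne_zero {μ : Measure ℝ} (hμ : μ ≠ 0) {η : ℝ} (hη : 0 < η) :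
    ∃ s, μ (Icc s (s + η)) ≠ 0 := by
  by_contra! h
  refine hμ (Measure.measure_univ_eq_zero.mp (measure_mono_null (fun z _ => ?_)
    (measure_iUnion_null fun n : ℤ => h (n * η))))
  refine mem_iUnion.mpr ⟨⌊z / η⌋, ?_, ?_⟩
  · exact (le_div_iff₀ hη).mp (Int.floor_le _)
  · have := (div_lt_iff₀ hη).mp (Int.lt_floor_add_one (z / η))
    linarith

lemma exists_frequently_gap {F : Measure ℝ} (hpos : ∀ x, 0 < tail F x)
    (hlim : ∀ t > 0, Real.exp (γ * t) ≤ liminf (fun x => tail F (x - t) / tail F x) atTop)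
    (hnotL : ¬ MemL γ F) :
    ∃ T > 0, ∃ ε > 0, ∃ᶠ x in atTop, (Real.exp (γ * T) + ε) * tail F x ≤ tail F (x - T) := by
  obtain ⟨T, hT, hnot⟩ : ∃ T > 0, ¬ Tendsto (fun x => tail F (x - T) / tail F x) atTop
      (𝓝 (Real.exp (γ * T))) := by
    by_contra! h
    exact hnotL (memL_of_forall_pos hpos h)
  obtain ⟨ε, hε, hfreq⟩ := frequently_add_le_of_not_tendsto (fun ε hε =>
    eventually_lt_of_lt_liminf (by linarith [hlim T hT]) (isBoundedUnder_ge_tail_ratio F T)) hnot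
  exact ⟨T, hT, ε, hε, hfreq.mono fun x hx => (le_div_iff₀ (hpos x)).mp hx⟩

lemma exists_pos_exp_mul_add_lt (γ T₀ : ℝ) {ε : ℝ} (hε : 0 < ε) :
    ∃ η > 0, Real.exp (γ * (T₀ + η)) < Real.exp (γ * T₀) + ε := by
  have : ∀ᶠ η in 𝓝 (0 : ℝ), Real.exp (γ * (T₀ + η)) < Real.exp (γ * T₀) + ε :=
    (by fun_prop : Continuous fun η => Real.exp (γ * (T₀ + η))).continuousAt.eventually_lt
      continuousAt_const (by simpa using hε)
  exact (eventually_mem_nhdsWithin.and (this.filter_mono nhdsWithin_le_nhds)).exists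
    (f := 𝓝[>] 0)

lemma add_le_tail_of_gap {F : Measure ℝ} [IsFiniteMeasure F] {w s η T₀ a r c y : ℝ}
    (hsη : 0 ≤ s + η) (hr : 0 ≤ r) (hc : 0 ≤ c) (hrc : r + c ≤ a)
    (hw : a * tail F w ≤ tail F (w - T₀)) (hy : y ∈ Icc s (s + η)) :
    r * tail F (w + (s + η) - y) + c * tail F (w + (s + η))
      ≤ tail F (w + (s + η) - (T₀ + η) - y) := by
  have h1 : tail F (w + (s + η) - y) ≤ tail F w := tail_antitone (by linarith [hy.2])
  have h2 : tail F (w + (s + η)) ≤ tail F w := tail_antitone (by linarith)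
  have h3 : tail F (w - T₀) ≤ tail F (w + (s + η) - (T₀ + η) - y) :=
    tail_antitone (by linarith [hy.1])
  calc _ ≤ r * tail F w + c * tail F w := by gcongr
    _ = (r + c) * tail F w := by ring
    _ ≤ a * tail F w := mul_le_mul_of_nonneg_right hrc (tail_nonneg _)
    _ ≤ _ := hw.trans h3

end TailRatio

section Regularity

variable {F H : Measure ℝ} [IsProbabilityMeasure F] {γ : ℝ}

lemma tail_pos_of_le_liminf
    (hlim : ∀ t > 0, Real.exp (γ * t) ≤ liminf (fun x => tail F (x - t) / tail F x) atTop)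
    (x : ℝ) : 0 < tail F x := by
  refine (tail_nonneg x).lt_of_ne' fun hx => (Real.exp_pos (γ * 1)).not_ge ?_
  have hzero : ∀ᶠ z in atTop, tail F (z - 1) / tail F z = 0 :=
    eventually_ge_atTop x |>.mono fun z hz => by
      rw [le_antisymm (hx ▸ tail_antitone hz) (tail_nonneg z), div_zero]
  simpa [liminf_congr hzero] using hlim 1 one_pos

lemma memLowerL_of_le_liminf
    (hlim : ∀ t > 0, Real.exp (γ * t) ≤ liminf (fun x => tail F (x - t) / tail F x) atTop) :
    MemLowerL γ F := fun t ht _ hr =>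
  (eventually_lt_of_lt_liminf (hr.trans_le (hlim t ht)) (isBoundedUnder_ge_tail_ratio F t)).mono
    fun x hx => (le_div_iff₀ (tail_pos_of_le_liminf hlim x)).mp hx.le

lemma isBigO_tail_mconv [IsProbabilityMeasure H] (hpos : ∀ x, 0 < tail F x)
    (hOS : tail (mconv F F) =O[atTop] tail F) (hH : tail H =O[atTop] tail F) :
    tail (mconv H F) =O[atTop] tail F := by
  obtain ⟨C₂, -, hC₂⟩ := exists_pos_eventually_tail_le hOS
  obtain ⟨C, hC, hHF⟩ := exists_pos_eventually_tail_le hH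
  obtain ⟨a, ha⟩ := eventually_atTop.mp hHF
  refine IsBigO.of_bound (C * C₂ + C₂ / tail F a) (hC₂.mono fun x hx => ?_)
  rw [Real.norm_of_nonneg (tail_nonneg _), Real.norm_of_nonneg (tail_nonneg _)]
  have hsplit : mconv H F (Ioi x)
      ≤ ENNReal.ofReal C * mconv F F (Ioi x) + F (Ioi (x - a)) := by
    rw [mconv_Ioi', mconv_Ioi', ← lintegral_add_compl _ (measurableSet_Iic (a := x - a)),
      compl_Iic, ← lintegral_const_mul _ (measurable_measure_Ioi_sub F x)]
    refine add_le_add ((setLIntegral_mono' measurableSet_Iic fun w hw => ?_).trans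
      (setLIntegral_le_lintegral _ _)) ?_
    · rw [← ofReal_tail, ← ofReal_tail, ← ENNReal.ofReal_mul hC.le]
      exact ENNReal.ofReal_le_ofReal (ha (x - w) (by linarith [hw.out]))
    · exact (setLIntegral_mono' measurableSet_Ioi fun _ _ => prob_le_one).trans
        (by simp)
  have hreal : tail (mconv H F) x ≤ C * tail (mconv F F) x + tail F (x - a) := by
    have := ENNReal.toReal_mono (by finiteness) hsplit
    rwa [ENNReal.toReal_add (by finiteness) (by finiteness), ENNReal.toReal_mul,
      ENNReal.toReal_ofReal hC.le] at this
  have hshift : tail F (x - a) ≤ C₂ / tail F a * tail F x := by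
    rw [div_mul_eq_mul_div, le_div_iff₀ (hpos a)]
    exact (tail_mul_tail_le x a).trans hx
  nlinarith [tail_nonneg (μ := F) x]

lemma isBigO_tail_iconv (hpos : ∀ x, 0 < tail F x) (hOS : tail (mconv F F) =O[atTop] tail F)
    (m : ℕ) : tail (iconv F (m + 1)) =O[atTop] tail F := by
  induction m with
  | zero => rw [zero_add, iconv_one]
  | succ m ih => exact isBigO_tail_mconv hpos hOS ih

/-- The cut points `M` are sought along a sequence on which `F̄` at least halves at each step:
if all of them failed, the blocks between consecutive points would give `(F * F)̄(x)` at least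
`ε/2 · F̄(x)` each, contradicting `F ∈ OS`. -/
lemma eventually_exists_tail_mul_tail_le (hpos : ∀ x, 0 < tail F x)
    (hOS : tail (mconv F F) =O[atTop] tail F) {ε : ℝ} (hε : 0 < ε) (L : ℝ) :
    ∃ L' ≥ L, ∀ᶠ x in atTop, ∃ M ∈ Icc L L', tail F M * tail F (x - M) ≤ ε * tail F x := by
  obtain ⟨C, -, hC⟩ := exists_pos_eventually_tail_le hOS
  have hhalf : ∀ a, ∃ b, a ≤ b ∧ tail F b ≤ tail F a / 2 := fun a =>
    ((tendsto_tail_atTop.eventually (gt_mem_nhds (half_pos (hpos a)))).and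
      (eventually_ge_atTop a)).exists.imp fun _ hb => ⟨hb.2, hb.1.le⟩
  choose next hnext_ge hnext_le using hhalf
  set a : ℕ → ℝ := fun n => next^[n] L with ha
  have ha_succ (n : ℕ) : a (n + 1) = next (a n) := Function.iterate_succ_apply' _ _ _
  have ha_mono : Monotone a := monotone_nat_of_le_succ fun n => (ha_succ n).symm ▸ hnext_ge _
  set N : ℕ := ⌈2 * C / ε⌉₊ + 1
  refine ⟨a N, ha_mono (Nat.zero_le N), hC.mono fun x hx => ?_⟩
  by_contra! hbad
  have hterm (n : ℕ) (hn : n ∈ Finset.range N) :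
      ε / 2 * tail F x < (F (Ioc (a n) (a (n + 1)))).toReal * tail F (x - a n) := by
    have hM := hbad (a n) ⟨ha_mono (Nat.zero_le n), ha_mono (Finset.mem_range.mp hn).le⟩
    rw [toReal_measure_Ioc (ha_mono n.le_succ), ha_succ]
    nlinarith [hnext_le (a n), tail_nonneg (μ := F) (x - a n)]
  have hsum := ENNReal.toReal_mono (measure_ne_top _ _)
    (sum_mul_le_mconv_Ioi (μ := F) (ν := F) ha_mono x N)
  rw [ENNReal.toReal_sum fun _ _ => by finiteness] at hsum
  simp only [ENNReal.toReal_mul] at hsum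
  have hlt := (Finset.sum_lt_sum_of_nonempty ⟨0, by simp [N]⟩ hterm).trans_le (hsum.trans hx)
  rw [Finset.sum_const, Finset.card_range, nsmul_eq_mul] at hlt
  have hN : 2 * C / ε < N := (Nat.le_ceil _).trans_lt (by simp [N])
  rw [div_lt_iff₀ hε] at hN
  nlinarith [hpos x]

lemma eventually_exists_split (hpos : ∀ x, 0 < tail F x)
    (hOS : tail (mconv F F) =O[atTop] tail F) (hF : MemLowerL γ F) (hH : MemLowerL γ H)
    (hHF : tail H =O[atTop] tail F) {T r δ : ℝ} (hT : 0 < T) (hr : r < Real.exp (γ * T))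
    (hδ : 0 < δ) (N : ℝ) :
    ∀ᶠ x in atTop, ∃ M, N ≤ x - M ∧ (∀ z ≥ M, r * tail F z ≤ tail F (z - T)) ∧
      (∀ z ≥ x - M + T, r * tail H z ≤ tail H (z - T)) ∧
      tail H (x - M) * tail F (M - T) ≤ δ * tail F x := by
  obtain ⟨C₂, hC₂, hOS'⟩ := exists_pos_eventually_tail_le hOS
  obtain ⟨C, hC, hHF'⟩ := exists_pos_eventually_tail_le hHF
  obtain ⟨Z_F, hZ_F⟩ := eventually_atTop.mp (hF T hT r hr)
  obtain ⟨Z_H, hZ_H⟩ := eventually_atTop.mp (hH T hT r hr)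
  obtain ⟨x_H, hx_H⟩ := eventually_atTop.mp hHF'
  obtain ⟨x₀, hx₀⟩ := eventually_atTop.mp hOS'
  have hε : 0 < δ * tail F T / (C * C₂) := by have := hpos T; positivity
  obtain ⟨L', -, hcut⟩ := eventually_exists_tail_mul_tail_le hpos hOS hε (max Z_F x₀)
  filter_upwards [hcut, eventually_ge_atTop (L' + N), eventually_ge_atTop (L' + Z_H),
    eventually_ge_atTop (L' + x_H)] with x ⟨M, ⟨hLM, hML'⟩, hMx⟩ hxN hxZ hxH
  rw [max_le_iff] at hLM
  refine ⟨M, by linarith, fun z hz => hZ_F z (by linarith), fun z hz => hZ_H z (by linarith), ?_⟩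
  have hHx : tail H (x - M) ≤ C * tail F (x - M) := hx_H _ (by linarith)
  have hFM : tail F (M - T) * tail F T ≤ C₂ * tail F M :=
    (tail_mul_tail_le M T).trans (hx₀ M hLM.2)
  refine le_of_mul_le_mul_right ?_ (hpos T)
  calc tail H (x - M) * tail F (M - T) * tail F T
      = tail H (x - M) * (tail F (M - T) * tail F T) := by ring
    _ ≤ C * tail F (x - M) * (C₂ * tail F M) :=
        mul_le_mul hHx hFM (mul_nonneg (tail_nonneg _) (tail_nonneg _))
          (mul_nonneg hC.le (tail_nonneg _))
    _ = C * C₂ * (tail F M * tail F (x - M)) := by ring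
    _ ≤ C * C₂ * (δ * tail F T / (C * C₂) * tail F x) := by gcongr
    _ = δ * tail F x * tail F T := by field_simp

lemma eventually_tail_mconv_sub_ge [IsProbabilityMeasure H] (hpos : ∀ x, 0 < tail F x)
    (hOS : tail (mconv F F) =O[atTop] tail F) (hF : MemLowerL γ F) (hH : MemLowerL γ H)
    (hHF : tail H =O[atTop] tail F) {T r δ : ℝ} (hT : 0 < T) (hr0 : 0 ≤ r)
    (hr : r < Real.exp (γ * T)) (hδ : 0 < δ) (N : ℝ) :
    ∀ᶠ x in atTop, ∀ c ≥ 0, ∀ B ⊆ Iic N, MeasurableSet B →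
      (∀ y ∈ B, r * tail F (x - y) + c * tail F x ≤ tail F (x - T - y)) →
      r * tail (mconv H F) x + c * tail F x * (H B).toReal
        ≤ tail (mconv H F) (x - T) + δ * tail F x := by
  filter_upwards [eventually_exists_split hpos hOS hF hH hHF hT hr
    (div_pos hδ (by linarith : 0 < r + 1)) N] with x ⟨M, hNM, hFM, hHM, hbd⟩ c hc B hBN hB hbump
  have hmain := tail_mconv_sub_ge hr0 hc hB (hBN.trans (Iic_subset_Iic.mpr hNM)) hFM hHM hbump
  have hr1 : r * (δ / (r + 1)) ≤ δ := by
    rw [mul_div_assoc', div_le_iff₀ (by linarith)]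
    nlinarith
  have hFx := tail_nonneg (μ := F) x
  calc _ ≤ _ := hmain
    _ ≤ tail (mconv H F) (x - T) + r * (δ / (r + 1) * tail F x) := by gcongr
    _ ≤ tail (mconv H F) (x - T) + δ * tail F x := by
        rw [← mul_assoc]; gcongr

theorem MemLowerL.mconv [IsProbabilityMeasure H] (hpos : ∀ x, 0 < tail F x)
    (hOS : tail (mconv F F) =O[atTop] tail F) (hF : MemLowerL γ F) (hH : MemLowerL γ H)
    (hHF : tail H =O[atTop] tail F) (hH0 : H (Iio 0) = 0) : MemLowerL γ (mconv H F) := by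
  intro t ht r' hr'
  rcases le_or_gt r' 0 with hr'0 | hr'0
  · exact Eventually.of_forall fun x =>
      (mul_nonpos_of_nonpos_of_nonneg hr'0 (tail_nonneg _)).trans (tail_nonneg _)
  obtain ⟨r, hr'r, hr⟩ := exists_between hr'
  filter_upwards [eventually_tail_mconv_sub_ge hpos hOS hF hH hHF ht (by linarith) hr
    (by linarith : 0 < r - r') 0] with x hx
  have hgap := hx 0 le_rfl ∅ (empty_subset _) MeasurableSet.empty (by simp)
  rw [zero_mul, zero_mul, add_zero] at hgap
  have hFG := mul_le_mul_of_nonneg_left (tail_le_tail_mconv (ν := F) hH0 x)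
    (by linarith : 0 ≤ r - r')
  linarith

lemma memLowerL_iconv (hpos : ∀ x, 0 < tail F x) (hOS : tail (mconv F F) =O[atTop] tail F)
    (hF : MemLowerL γ F) (hF0 : F (Iio 0) = 0) (m : ℕ) : MemLowerL γ (iconv F (m + 1)) := by
  induction m with
  | zero => rwa [zero_add, iconv_one]
  | succ m ih =>
      exact MemLowerL.mconv hpos hOS hF ih (isBigO_tail_iconv hpos hOS m)
        (iconv_Iio_eq_zero hF0 _)

theorem not_memL_mconv [IsProbabilityMeasure H] (hpos : ∀ x, 0 < tail F x)
    (hOS : tail (mconv F F) =O[atTop] tail F) (hF : MemLowerL γ F) (hH : MemLowerL γ H)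
    (hHF : tail H =O[atTop] tail F) (hH0 : H (Iio 0) = 0) {T₀ ε₀ : ℝ} (hT₀ : 0 < T₀)
    (hε₀ : 0 < ε₀)
    (hgap : ∃ᶠ x in atTop, (Real.exp (γ * T₀) + ε₀) * tail F x ≤ tail F (x - T₀)) :
    ¬ MemL γ (mconv H F) := by
  intro hG
  -- a positive width `η` is needed because `H` may have no atoms
  obtain ⟨η, hη, he⟩ := exists_pos_exp_mul_add_lt γ T₀ (half_pos hε₀)
  set T := T₀ + η
  set e := Real.exp (γ * T)
  obtain ⟨s, hs⟩ := exists_measure_Icc_ne_zero (IsProbabilityMeasure.ne_zero H) hη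
  have hsη : 0 ≤ s + η := by
    by_contra! h
    exact hs (measure_mono_null (fun y hy => (hy.2.trans_lt h : y < 0)) hH0)
  set mB := (H (Icc s (s + η))).toReal
  have hmB : 0 < mB := ENNReal.toReal_pos hs (measure_ne_top _ _)
  obtain ⟨C, hC, hGF⟩ := exists_pos_eventually_tail_le (isBigO_tail_mconv hpos hOS hHF)
  obtain ⟨ε, hε, hεe, hεC⟩ : ∃ ε > 0, ε ≤ e / 2 ∧ ε * C ≤ ε₀ * mB / 16 :=
    ⟨min (e / 2) (ε₀ * mB / (16 * C)), lt_min (by positivity) (by positivity), min_le_left _ _,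
      (mul_le_mul_of_nonneg_right (min_le_right _ _) hC.le).trans_eq (by field_simp)⟩
  have hGpos (x : ℝ) : 0 < tail (mconv H F) x := (hpos x).trans_le (tail_le_tail_mconv hH0 x)
  have hGT : ∀ᶠ x in atTop, tail (mconv H F) (x - T) ≤ (e + ε) * tail (mconv H F) x :=
    ((hG T).eventually_lt_const (by linarith)).mono fun x hx =>
      ((div_lt_iff₀ (hGpos x)).mp hx).le
  have hsplit := eventually_tail_mconv_sub_ge hpos hOS hF hH hHF (by positivity : 0 < T)
    (by linarith : 0 ≤ e - ε) (by linarith : e - ε < e) (by positivity : 0 < ε₀ * mB / 8) (s + η)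
  obtain ⟨w, hw, hGTx, hsplitx, hGFx⟩ := (hgap.and_eventually
    ((tendsto_atTop_add_const_right atTop (s + η) tendsto_id).eventually
      (hGT.and (hsplit.and hGF)))).exists
  simp only [id_eq] at hGTx hsplitx hGFx
  set x := w + (s + η)
  have hmain : (e - ε) * tail (mconv H F) x + ε₀ / 2 * tail F x * mB
      ≤ tail (mconv H F) (x - T) + ε₀ * mB / 8 * tail F x :=
    hsplitx (ε₀ / 2) (by positivity) _ Icc_subset_Iic_self measurableSet_Icc fun y hy =>
      add_le_tail_of_gap hsη (by linarith) (by positivity) (by linarith) hw hy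
  have hεG : ε * tail (mconv H F) x ≤ ε₀ * mB / 16 * tail F x := by
    calc ε * tail (mconv H F) x ≤ ε * (C * tail F x) := by gcongr
      _ ≤ ε₀ * mB / 16 * tail F x := by
          rw [← mul_assoc]; exact mul_le_mul_of_nonneg_right hεC (tail_nonneg _)
  have := mul_pos (mul_pos hε₀ hmB) (hpos x)
  linarith

end Regularity

theorem stmt11_general (F : Measure ℝ) [IsProbabilityMeasure F] (hs : F (Set.Iio 0) = 0)
    (γ : ℝ) (hOS : MemOS F) (hnotL : ¬ MemL γ F)
    (hlim : ∀ t > (0 : ℝ),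
      Real.exp (γ * t) ≤ Filter.liminf (fun x => tail F (x - t) / tail F x) Filter.atTop) :
    ∀ k : ℕ, 2 ≤ k → ¬ MemL γ (iconv F k) := by
  intro k hk
  obtain ⟨m, rfl⟩ := Nat.exists_eq_add_of_le' hk
  have hpos := tail_pos_of_le_liminf hlim
  have hOS' := hOS.isBigO hpos
  have hF := memLowerL_of_le_liminf hlim
  obtain ⟨T₀, hT₀, ε₀, hε₀, hgap⟩ := exists_frequently_gap hpos hlim hnotL
  exact not_memL_mconv hpos hOS' hF (memLowerL_iconv hpos hOS' hF hs m)
    (isBigO_tail_iconv hpos hOS' m) (iconv_Iio_eq_zero hs _) hT₀ hε₀ hgap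

theorem stmt11 (F : Measure ℝ) [IsProbabilityMeasure F] (hs : F (Set.Iio 0) = 0)
    (γ : ℝ) (hγ : 0 ≤ γ) (hOS : MemOS F) (hnotL : ¬ MemL γ F)
    (hlim : ∀ t > (0 : ℝ),
      Real.exp (γ * t) ≤ Filter.liminf (fun x => tail F (x - t) / tail F x) Filter.atTop) :
    ∀ k : ℕ, 2 ≤ k → ¬ MemL γ (iconv F k) :=
  stmt11_general F hs γ hOS hnotL hlim
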